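/- Let a, b, c > 0 and p < q < r be real numbers, let f(u) = -a u^p + b u^q - c u^r for u > 0, and let f̃(u) = (u f'(u))' f(u) - u f'(u)^2. Then exactly one of the following three mutually exclusive cases holds: (a) there exists u > 0 with f(u) > 0, and then f̃(u) < 0 for all u > 0; (b) f has exactly one zero on (0,∞) and f ≤ 0 on (0,∞), and then f̃ has exactly one zero on (0,∞); (c) f(u) < 0 for all u > 0, and then there exists u > 0 with f̃(u) > 0. -/

import Mathlib

/-!
On `(0, ∞)` we have `f u = u ^ q * (b - g u)` and `f̃ u = u ^ (p + r - 1) * (a c (r - p)² - k u)`,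
where `g` and `k` are both of the form `x u^(-α) + z u^β` with `x, z, α, β > 0`. By weighted AM–GM
such a function has a unique strict minimum, at the point where `x α u^(-α) = z β u^β`, and for
`g` and `k` this is the same point `u₀`, given by `c (r - q) u₀^(r - p) = a (q - p)`. There
`a c (r - p)² - k u₀` is a negative multiple of `b - g u₀`, so the sign of `b - g u₀` decides
both which case `f` is in and how `f̃` behaves.
-/

open Real Set

theorem add_lt_mul_rpow_neg_add_mul_rpow {α β v : ℝ} (hα : 0 < α) (hβ : 0 < β) (hv : 0 < v)
    (hv1 : v ≠ 1) : α + β < β * v ^ (-α) + α * v ^ β := by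
  have hs : 0 < α + β := by positivity
  have hne : v ^ (-α) ≠ v ^ β := fun h => by linarith [(rpow_right_inj hv hv1).1 h]
  have amgm := (geom_mean_lt_arith_mean2_weighted_iff_of_pos (div_pos hβ hs) (div_pos hα hs)
    (rpow_pos_of_pos hv (-α)).le (rpow_pos_of_pos hv β).le (by field_simp; ring)).2 hne
  have hgm : (v ^ (-α)) ^ (β / (α + β)) * (v ^ β) ^ (α / (α + β)) = 1 := by
    rw [← rpow_mul hv.le, ← rpow_mul hv.le, ← rpow_add hv]
    convert rpow_zero v using 2
    ring
  rw [hgm] at amgm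
  field_simp at amgm
  linarith

noncomputable def negPowAddPow (x z α β u : ℝ) : ℝ := x * u ^ (-α) + z * u ^ β

theorem negPowAddPow_lt {x z α β u₀ u : ℝ} (hz : 0 < z) (hα : 0 < α) (hβ : 0 < β)
    (hu₀ : 0 < u₀) (hcrit : z * β * u₀ ^ (α + β) = x * α) (hu : 0 < u) (hne : u ≠ u₀) :
    negPowAddPow x z α β u₀ < negPowAddPow x z α β u := by
  have hv : 0 < u / u₀ := div_pos hu hu₀
  have hv1 : u / u₀ ≠ 1 := by rwa [Ne, div_eq_one_iff_eq hu₀.ne']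
  have hu_eq : u = u₀ * (u / u₀) := by field_simp
  have hbal : x * u₀ ^ (-α) * α = z * u₀ ^ β * β := by
    rw [rpow_add hu₀] at hcrit
    rw [rpow_neg hu₀.le]
    field_simp
    linear_combination -hcrit
  have key := mul_lt_mul_of_pos_left (add_lt_mul_rpow_neg_add_mul_rpow hα hβ hv hv1)
    (by positivity : 0 < z * u₀ ^ β)
  unfold negPowAddPow
  rw [hu_eq, mul_rpow hu₀.le hv.le, mul_rpow hu₀.le hv.le]
  nlinarith [rpow_pos_of_pos hv (-α)]

theorem isMinOn_of_forall_ne_lt {X Y : Type*} [Preorder Y] {G : X → Y} {s : Set X} {u₀ : X}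
    (h : ∀ u ∈ s, u ≠ u₀ → G u₀ < G u) : IsMinOn G s u₀ := isMinOn_iff.2 fun u hu =>
  (eq_or_ne u u₀).elim (fun hu₀ => hu₀ ▸ le_rfl) fun hne => (h u hu hne).le

section Profile

variable {F w G : ℝ → ℝ} {K u₀ : ℝ}

theorem exists_pos_iff_of_eq_mul_sub (hF : ∀ u, 0 < u → F u = w u * (K - G u))
    (hw : ∀ u, 0 < u → 0 < w u) (hu₀ : 0 < u₀) (hmin : IsMinOn G (Ioi 0) u₀) :
    (∃ u, 0 < u ∧ 0 < F u) ↔ G u₀ < K := by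
  constructor
  · rintro ⟨u, hu, hFu⟩
    rw [hF u hu] at hFu
    linarith [isMinOn_iff.1 hmin u hu, (pos_iff_pos_of_mul_pos hFu).1 (hw u hu)]
  · exact fun hK => ⟨u₀, hu₀, hF u₀ hu₀ ▸ mul_pos (hw u₀ hu₀) (sub_pos.2 hK)⟩

theorem forall_neg_iff_of_eq_mul_sub (hF : ∀ u, 0 < u → F u = w u * (K - G u))
    (hw : ∀ u, 0 < u → 0 < w u) (hu₀ : 0 < u₀) (hmin : IsMinOn G (Ioi 0) u₀) :
    (∀ u, 0 < u → F u < 0) ↔ K < G u₀ := by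
  constructor
  · intro hneg
    have h := hneg u₀ hu₀
    rw [hF u₀ hu₀] at h
    linarith [neg_of_mul_neg_right h (hw u₀ hu₀).le]
  · intro hK u hu
    rw [hF u hu]
    exact mul_neg_of_pos_of_neg (hw u hu) (by linarith [isMinOn_iff.1 hmin u hu])

theorem unique_zero_and_nonpos_iff_of_eq_mul_sub (hF : ∀ u, 0 < u → F u = w u * (K - G u))
    (hw : ∀ u, 0 < u → 0 < w u) (hu₀ : 0 < u₀) (hmin : ∀ u ∈ Ioi 0, u ≠ u₀ → G u₀ < G u) :
    ((∃! u, 0 < u ∧ F u = 0) ∧ ∀ u, 0 < u → F u ≤ 0) ↔ G u₀ = K := by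
  have hmin' := isMinOn_of_forall_ne_lt hmin
  constructor
  · rintro ⟨⟨u, ⟨hu, hFu⟩, -⟩, hle⟩
    refine le_antisymm (not_lt.1 fun hK => ?_) (not_lt.1 fun hK => ?_)
    · linarith [(forall_neg_iff_of_eq_mul_sub hF hw hu₀ hmin').2 hK u hu]
    · obtain ⟨v, hv, hFv⟩ := (exists_pos_iff_of_eq_mul_sub hF hw hu₀ hmin').2 hK
      linarith [hle v hv]
  · intro hK
    have hlt : ∀ u, 0 < u → u ≠ u₀ → F u < 0 := fun u hu hne => by
      rw [hF u hu]
      exact mul_neg_of_pos_of_neg (hw u hu) (by linarith [hmin u hu hne])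
    refine ⟨⟨u₀, ⟨hu₀, by rw [hF u₀ hu₀, hK, sub_self, mul_zero]⟩, ?_⟩, fun u hu => ?_⟩
    · rintro u ⟨hu, hFu⟩
      by_contra hne
      exact (hlt u hu hne).ne hFu
    · rcases eq_or_ne u u₀ with rfl | hne
      · rw [hF u hu, hK, sub_self, mul_zero]
      · exact (hlt u hu hne).le

end Profile

noncomputable def threePow (a b c p q r u : ℝ) : ℝ := -a * u ^ p + b * u ^ q - c * u ^ r

noncomputable def tilde (f : ℝ → ℝ) (u : ℝ) : ℝ :=
  deriv (fun v => v * deriv f v) u * f u - u * deriv f u ^ 2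

theorem hasDerivAt_threePow (a b c p q r : ℝ) {u : ℝ} (hu : u ≠ 0) :
    HasDerivAt (threePow a b c p q r)
      (-a * (p * u ^ (p - 1)) + b * (q * u ^ (q - 1)) - c * (r * u ^ (r - 1))) u :=
  (((hasDerivAt_rpow_const (Or.inl hu)).const_mul (-a)).add
    ((hasDerivAt_rpow_const (Or.inl hu)).const_mul b)).sub
    ((hasDerivAt_rpow_const (Or.inl hu)).const_mul c)

-- For `f = ∑ cᵢ u^pᵢ` one has `u f̃ = ½ ∑ cᵢ cⱼ (pᵢ - pⱼ)² u^(pᵢ + pⱼ)`.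
theorem mul_tilde_threePow (a b c p q r : ℝ) {u : ℝ} (hu : 0 < u) :
    u * tilde (threePow a b c p q r) u =
      -(a * b * (q - p) ^ 2) * u ^ (p + q) + a * c * (r - p) ^ 2 * u ^ (p + r)
        - b * c * (r - q) ^ 2 * u ^ (q + r) := by
  have hEuler : (fun v => v * deriv (threePow a b c p q r) v)
      =ᶠ[nhds u] threePow (a * p) (b * q) (c * r) p q r := by
    filter_upwards [Ioi_mem_nhds hu] with v (hv : 0 < v)
    rw [(hasDerivAt_threePow a b c p q r hv.ne').deriv, rpow_sub_one hv.ne',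
      rpow_sub_one hv.ne', rpow_sub_one hv.ne', threePow]
    field_simp
  unfold tilde
  rw [hEuler.deriv_eq, (hasDerivAt_threePow _ _ _ p q r hu.ne').deriv,
    (hasDerivAt_threePow a b c p q r hu.ne').deriv, rpow_sub_one hu.ne', rpow_sub_one hu.ne',
    rpow_sub_one hu.ne', rpow_add hu, rpow_add hu, rpow_add hu, threePow]
  field_simp
  ring

theorem threePow_eq_mul (a b c p q r : ℝ) {u : ℝ} (hu : 0 < u) :
    threePow a b c p q r u = u ^ q * (b - negPowAddPow a c (q - p) (r - q) u) := by
  have hp : u ^ q * u ^ (-(q - p)) = u ^ p := by rw [← rpow_add hu]; ring_nf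
  have hr : u ^ q * u ^ (r - q) = u ^ r := by rw [← rpow_add hu]; ring_nf
  unfold threePow negPowAddPow
  linear_combination a * hp + c * hr

theorem tilde_threePow_eq_mul (a b c p q r : ℝ) {u : ℝ} (hu : 0 < u) :
    tilde (threePow a b c p q r) u = u ^ (p + r - 1) *
      (a * c * (r - p) ^ 2 -
        negPowAddPow (a * b * (q - p) ^ 2) (b * c * (r - q) ^ 2) (r - q) (q - p) u) := by
  have hq : u ^ (p + r) * u ^ (-(r - q)) = u ^ (p + q) := by rw [← rpow_add hu]; ring_nf
  have hp : u ^ (p + r) * u ^ (q - p) = u ^ (q + r) := by rw [← rpow_add hu]; ring_nf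
  apply mul_left_cancel₀ hu.ne'
  rw [mul_tilde_threePow a b c p q r hu, rpow_sub_one hu.ne']
  unfold negPowAddPow
  field_simp
  linear_combination a * b * (q - p) ^ 2 * hq + b * c * (r - q) ^ 2 * hp

theorem sub_negPowAddPow_eq_neg_mul (a b c p q r : ℝ) {u₀ : ℝ} (hu₀ : 0 < u₀)
    (hcrit : c * (r - q) * u₀ ^ (q - p + (r - q)) = a * (q - p)) :
    a * c * (r - p) ^ 2 -
        negPowAddPow (a * b * (q - p) ^ 2) (b * c * (r - q) ^ 2) (r - q) (q - p) u₀ =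
      -(c * (r - p) * (r - q) * u₀ ^ (q - p)) * (b - negPowAddPow a c (q - p) (r - q) u₀) := by
  unfold negPowAddPow
  rw [rpow_add hu₀] at hcrit
  rw [rpow_neg hu₀.le, rpow_neg hu₀.le]
  field_simp
  linear_combination (b * (q - p) - c * (r - p) * u₀ ^ (r - q)) * hcrit

theorem exists_pos_mul_rpow_eq {x y s : ℝ} (hx : 0 < x) (hy : 0 < y) (hs : s ≠ 0) :
    ∃ u, 0 < u ∧ x * u ^ s = y :=
  ⟨(y / x) ^ s⁻¹, by positivity, by
    rw [← rpow_mul (div_pos hy hx).le, inv_mul_cancel₀ hs, rpow_one, mul_div_cancel₀ _ hx.ne']⟩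

/-- Trichotomy for `f u = -a u^p + b u^q - c u^r` with `a,b,c > 0`,
`p < q < r`: exactly one of the following mutually exclusive cases holds:
(a) `∃ u > 0, f u > 0`, and then `f̃ u < 0` for all `u > 0`;
(b) `f` has exactly one zero on `(0,∞)` and `f ≤ 0` there, and then `f̃` has
exactly one zero on `(0,∞)`;
(c) `f u < 0` for all `u > 0`, and then `∃ u > 0, f̃ u > 0`. -/
theorem stmt_19 (a b c p q r : ℝ) (ha : 0 < a) (hb : 0 < b) (hc : 0 < c)
    (hpq : p < q) (hqr : q < r)
    (f : ℝ → ℝ) (hf : f = fun u : ℝ => -a * u ^ p + b * u ^ q - c * u ^ r)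
    (ftilde : ℝ → ℝ)
    (hftilde : ftilde = fun u : ℝ =>
      deriv (fun v : ℝ => v * deriv f v) u * f u - u * (deriv f u) ^ 2)
    (A : Prop) (hA : A ↔ ∃ u : ℝ, 0 < u ∧ 0 < f u)
    (B : Prop) (hB : B ↔ (∃! u : ℝ, 0 < u ∧ f u = 0) ∧ ∀ u : ℝ, 0 < u → f u ≤ 0)
    (C : Prop) (hC : C ↔ ∀ u : ℝ, 0 < u → f u < 0) :
    ((A ∧ ¬B ∧ ¬C) ∨ (¬A ∧ B ∧ ¬C) ∨ (¬A ∧ ¬B ∧ C)) ∧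
    (A → ∀ u : ℝ, 0 < u → ftilde u < 0) ∧
    (B → ∃! u : ℝ, 0 < u ∧ ftilde u = 0) ∧
    (C → ∃ u : ℝ, 0 < u ∧ 0 < ftilde u) := by
  have hα : 0 < q - p := sub_pos.2 hpq
  have hβ : 0 < r - q := sub_pos.2 hqr
  obtain ⟨u₀, hu₀, hcrit⟩ := exists_pos_mul_rpow_eq (by positivity : 0 < c * (r - q))
    (by positivity : 0 < a * (q - p)) (by linarith : q - p + (r - q) ≠ 0)
  have hlink := sub_negPowAddPow_eq_neg_mul a b c p q r hu₀ hcrit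
  set g := negPowAddPow a c (q - p) (r - q)
  set k := negPowAddPow (a * b * (q - p) ^ 2) (b * c * (r - q) ^ 2) (r - q) (q - p)
  have hg : ∀ u ∈ Ioi 0, u ≠ u₀ → g u₀ < g u := fun u hu hne =>
    negPowAddPow_lt hc hα hβ hu₀ hcrit hu hne
  have hk : ∀ u ∈ Ioi 0, u ≠ u₀ → k u₀ < k u := fun u hu hne =>
    negPowAddPow_lt (by positivity) hβ hα hu₀
      (by rw [add_comm]; linear_combination b * (q - p) * (r - q) * hcrit) hu hne
  have hfg : ∀ u, 0 < u → f u = u ^ q * (b - g u) := fun u hu => hf ▸ threePow_eq_mul a b c p q r hu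
  have hfk : ∀ u, 0 < u → ftilde u = u ^ (p + r - 1) * (a * c * (r - p) ^ 2 - k u) :=
    fun u hu => by rw [hftilde, hf]; exact tilde_threePow_eq_mul a b c p q r hu
  have hwf : ∀ u : ℝ, 0 < u → 0 < u ^ q := fun u hu => rpow_pos_of_pos hu q
  have hwk : ∀ u : ℝ, 0 < u → 0 < u ^ (p + r - 1) := fun u hu => rpow_pos_of_pos hu _
  have hκ : 0 < c * (r - p) * (r - q) * u₀ ^ (q - p) := by
    have := sub_pos.2 (hpq.trans hqr); positivity
  have hgmin := isMinOn_of_forall_ne_lt hg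
  have hkmin := isMinOn_of_forall_ne_lt hk
  rw [hA, hB, hC, exists_pos_iff_of_eq_mul_sub hfg hwf hu₀ hgmin,
    unique_zero_and_nonpos_iff_of_eq_mul_sub hfg hwf hu₀ hg,
    forall_neg_iff_of_eq_mul_sub hfg hwf hu₀ hgmin]
  refine ⟨?_, fun hlt => (forall_neg_iff_of_eq_mul_sub hfk hwk hu₀ hkmin).2 ?_,
    fun heq => ((unique_zero_and_nonpos_iff_of_eq_mul_sub hfk hwk hu₀ hk).2 ?_).1,
    fun hgt => (exists_pos_iff_of_eq_mul_sub hfk hwk hu₀ hkmin).2 ?_⟩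
  · rcases lt_trichotomy (g u₀) b with h | h | h <;> grind
  · nlinarith [mul_pos hκ (sub_pos.2 hlt)]
  · linear_combination -hlink - c * (r - p) * (r - q) * u₀ ^ (q - p) * heq
  · nlinarith [mul_pos hκ (sub_pos.2 hgt)]
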